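/- arXiv:1611.06628 — 2 statements merged into one kernel-verified Lean document; each statement's English description precedes it below -/
import Mathlib

section
/- The discriminant of the polynomial f₁(x) = x^12 - 4x^11 - 4x^10 + 16x^9 + 24x^8 - 30x^7 - 78x^6 - 18x^5 + 72x^4 + 86x^3 + 52x^2 + 16x + 2 equals -2^14 · 3^30 · 11^9. -/
/-!
Write `f₁ = ∏ᵢ (X - rᵢ)`. Then `∏_{i ≠ j} (rᵢ - rⱼ) = ∏ᵢ f₁'(rᵢ)` is the resultant `Res(f₁, f₁')`,
and it differs from `∏_{i < j} (rᵢ - rⱼ)²` by the sign `(-1) ^ (12 choose 2) = 1`.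

The resultant is computed along a pseudo-remainder sequence `f₁ = P₁₂, f₁' = P₁₁, …, P₀ = -1` with
`deg Pₙ = n` and `cₙ Pₙ₊₂ = Pₙ₊₁ Qₙ + dₙ Pₙ`: by the invariance of `Res(A, B)` under
`A ↦ A + B Q`, each step multiplies the resultant by an explicit rational factor.
-/

open Polynomial Finset

namespace Polynomial

variable {R : Type*} [CommRing R]

theorem pow_mul_resultant_eq_of_C_mul_eq_mul_add_C_mul {A B S k : R[X]} {a b s : ℕ} {c d : R}
    (h : C c * A = B * k + C d * S) (hB : B.natDegree ≤ b) (hk : k.natDegree + b ≤ a)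
    (hS : S.natDegree ≤ s) (hsa : s ≤ a) :
    c ^ b * resultant A B a b =
      (-1) ^ (a * b) * d ^ b * B.coeff b ^ (a - s) * resultant B S b s := by
  obtain ⟨e, rfl⟩ := Nat.exists_eq_add_of_le hsa
  calc c ^ b * resultant A B (s + e) b
      = (-1) ^ ((s + e) * b) * resultant B (C c * A) b (s + e) := by
        rw [resultant_comm, resultant_C_mul_right]; ring
    _ = (-1) ^ ((s + e) * b) * resultant B (C d * S) b (s + e) := by
        rw [h, add_comm (B * k), resultant_add_mul_right _ _ _ _ _ hk hB]
    _ = _ := by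
        rw [resultant_C_mul_right, resultant_add_right_deg _ _ _ _ _ hS, Nat.add_sub_cancel_left]
        ring

theorem prod_pow_mul_resultant_eq_of_remainder_seq {P Q : ℕ → R[X]} {c d : ℕ → R} (n : ℕ)
    (hP : ∀ i ≤ n + 1, (P i).natDegree ≤ i) (hQ : ∀ i < n, (Q i).natDegree ≤ 1)
    (hstep : ∀ i < n, C (c i) * P (i + 2) = P (i + 1) * Q i + C (d i) * P i) :
    (∏ i ∈ range n, c i ^ (i + 1)) * resultant (P (n + 1)) (P n) (n + 1) n =
      (∏ i ∈ range n, d i ^ (i + 1) * (P (i + 1)).coeff (i + 1) ^ 2) *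
        resultant (P 1) (P 0) 1 0 := by
  induction n with
  | zero => simp
  | succ n ih =>
    have hsign : (-1 : R) ^ ((n + 2) * (n + 1)) = 1 :=
      (mul_comm (n + 1) (n + 2) ▸ Nat.even_mul_succ_self (n + 1)).neg_one_pow
    have hres := pow_mul_resultant_eq_of_C_mul_eq_mul_add_C_mul (a := n + 2) (hstep n (by omega))
      (hP (n + 1) (by omega)) (by linarith [hQ n (by omega)]) (hP n (by omega)) (by omega)
    rw [hsign, show n + 2 - n = 2 by omega] at hres
    have ih' := ih (fun i hi => hP i (by omega)) (fun i hi => hQ i (by omega))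
      (fun i hi => hstep i (by omega))
    rw [prod_range_succ, prod_range_succ]
    linear_combination (∏ i ∈ range n, c i ^ (i + 1)) * hres +
      d n ^ (n + 1) * (P (n + 1)).coeff (n + 1) ^ 2 * ih'

end Polynomial

theorem Fin.sum_card_Ioi (n : ℕ) : ∑ i : Fin n, #(Ioi i) = n.choose 2 := by
  simp only [Fin.card_Ioi]
  rw [Fin.sum_univ_eq_sum_range (fun i => n - 1 - i), sum_range_reflect (fun i => i),
    sum_range_id, Nat.choose_two_right]

theorem Fin.prod_prod_erase_sub {R : Type*} [CommRing R] {n : ℕ} (v : Fin n → R) :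
    ∏ i, ∏ j ∈ univ.erase i, (v i - v j) =
      (-1) ^ n.choose 2 * ∏ i, ∏ j ∈ Ioi i, (v i - v j) ^ 2 := by
  have hsplit (g : Fin n → R) (i : Fin n) :
      ∏ j ∈ univ.erase i, g j = (∏ j ∈ Ioi i, g j) * ∏ j ∈ Iio i, g j := by
    rw [← compl_singleton, ← Ioi_disjUnion_Iio, prod_disjUnion]
  have hswap : ∏ i, ∏ j ∈ Iio i, (v i - v j) = ∏ i, ∏ j ∈ Ioi i, (v j - v i) :=
    prod_comm' (by simp)
  calc ∏ i, ∏ j ∈ univ.erase i, (v i - v j)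
      = (∏ i, ∏ j ∈ Ioi i, (v i - v j)) * ∏ i, ∏ j ∈ Iio i, (v i - v j) := by
        simp_rw [hsplit, prod_mul_distrib]
    _ = ∏ i, ∏ j ∈ Ioi i, (-1) * (v i - v j) ^ 2 := by
        rw [hswap, ← prod_mul_distrib]
        refine prod_congr rfl fun i _ => ?_
        rw [← prod_mul_distrib]
        exact prod_congr rfl fun j _ => by ring
    _ = _ := by
        simp only [prod_mul_distrib, Finset.prod_const, prod_pow_eq_pow_sum, Fin.sum_card_Ioi]

theorem Lagrange.resultant_nodal_derivative {R ι : Type*} [CommRing R] [Nontrivial R]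
    [DecidableEq ι] (s : Finset ι) (v : ι → R) :
    resultant (nodal s v) (derivative (nodal s v)) = ∏ i ∈ s, ∏ j ∈ s.erase i, (v i - v j) := by
  have h := resultant_prod_left s (fun i => X - C (v i)) (derivative (nodal s v)) _
    (by simp) le_rfl
  rw [← nodal_eq] at h
  rw [h]
  refine prod_congr rfl fun i hi => ?_
  rw [natDegree_X_sub_C, resultant_X_sub_C_left _ _ _ le_rfl,
    eval_nodal_derivative_eval_node_eq hi, eval_nodal]

noncomputable def f₁ : ℂ[X] :=
  X ^ 12 - 4 * X ^ 11 - 4 * X ^ 10 + 16 * X ^ 9 + 24 * X ^ 8 - 30 * X ^ 7 - 78 * X ^ 6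
    - 18 * X ^ 5 + 72 * X ^ 4 + 86 * X ^ 3 + 52 * X ^ 2 + 16 * X + 2

noncomputable def f₁Rem : ℕ → ℂ[X]
  | 12 => f₁
  | 11 => 12 * X ^ 11 - 44 * X ^ 10 - 40 * X ^ 9 + 144 * X ^ 8 + 192 * X ^ 7 - 210 * X ^ 6
      - 468 * X ^ 5 - 90 * X ^ 4 + 288 * X ^ 3 + 258 * X ^ 2 + 104 * X + 16
  | 10 => -34 * X ^ 10 + 52 * X ^ 9 + 216 * X ^ 8 - 129 * X ^ 7 - 807 * X ^ 6 - 423 * X ^ 5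
      + 819 * X ^ 4 + 1305 * X ^ 3 + 909 * X ^ 2 + 316 * X + 44
  | 9 => -16 * X ^ 9 - 345 * X ^ 8 + 24 * X ^ 7 + 1335 * X ^ 6 + 750 * X ^ 5 - 1323 * X ^ 4
      - 2010 * X ^ 3 - 1692 * X ^ 2 - 636 * X - 92
  | 8 => -225 * X ^ 8 - 24 * X ^ 7 + 847 * X ^ 6 + 526 * X ^ 5 - 803 * X ^ 4 - 1258 * X ^ 3
      - 1084 * X ^ 2 - 412 * X - 60
  | 7 => 51 * X ^ 7 + 697 * X ^ 6 + 601 * X ^ 5 - 1103 * X ^ 4 - 1783 * X ^ 3 - 1159 * X ^ 2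
      - 412 * X - 60
  | 6 => -1039 * X ^ 6 - 1096 * X ^ 5 + 1559 * X ^ 4 + 2728 * X ^ 3 + 1807 * X ^ 2 + 652 * X + 96
  | 5 => -19270 * X ^ 5 - 79597 * X ^ 4 - 110146 * X ^ 3 - 167063 * X ^ 2 - 73196 * X - 11402
  | 4 => -38461 * X ^ 4 - 44048 * X ^ 3 - 148059 * X ^ 2 - 73328 * X - 12106
  | 3 => 39730 * X ^ 3 + 121015 * X ^ 2 + 56500 * X + 8904
  | 2 => -67445 * X ^ 2 - 35996 * X - 6080
  | 1 => -844 * X - 225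
  | 0 => C (-1)
  | _ => 0

noncomputable def f₁Quo : ℕ → ℂ[X]
  | 10 => 12 * X - 4
  | 9 => -408 * X + 872
  | 8 => 544 * X - 12562
  | 7 => 3600 * X + 77241
  | 6 => -11475 * X + 155601
  | 5 => -52989 * X - 668287
  | 4 => 20021530 * X - 61581363
  | 3 => 741143470 * X + 2212575257
  | 2 => -1528055530 * X + 2904330875
  | 1 => -2679589850 * X - 6731735595
  | 0 => 56923580 * X + 15205499
  | _ => 0

def f₁Scale : ℕ → ℂ
  | 10 => 144
  | 9 => 1156
  | 8 => 256
  | 7 => 50625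
  | 6 => 2601
  | 5 => 1079521
  | 4 => 371332900
  | 3 => 1479248521
  | 2 => 1578472900
  | 1 => 4548828025
  | 0 => 712336
  | _ => 0

def f₁RemScale : ℕ → ℂ
  | 10 => 8
  | 9 => 216
  | 8 => 19074
  | 7 => 384
  | 6 => 95625
  | 5 => 54
  | 4 => 55055571
  | 3 => 1113998700
  | 2 => 7396242605
  | 1 => 1894167480
  | 0 => 909765605
  | _ => 0

theorem derivative_f₁ : derivative f₁ = f₁Rem 11 := by
  simp only [f₁, f₁Rem, derivative_add, derivative_sub, derivative_mul, derivative_X_pow,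
    derivative_X, derivative_ofNat, Nat.cast_ofNat, map_ofNat]
  ring

theorem natDegree_f₁Rem_le {i : ℕ} (hi : i ≤ 12) : (f₁Rem i).natDegree ≤ i := by
  interval_cases i <;> simp only [f₁Rem, f₁] <;> compute_degree

theorem natDegree_f₁Quo_le (i : ℕ) : (f₁Quo i).natDegree ≤ 1 := by
  unfold f₁Quo; split <;> compute_degree!

theorem f₁Rem_step {i : ℕ} (hi : i < 11) :
    C (f₁Scale i) * f₁Rem (i + 2) = f₁Rem (i + 1) * f₁Quo i + C (f₁RemScale i) * f₁Rem i := by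
  interval_cases i <;>
    simp only [f₁Rem, f₁Quo, f₁Scale, f₁RemScale, f₁, map_ofNat, map_neg, map_one] <;> ring

theorem resultant_f₁_derivative : resultant f₁ (derivative f₁) = -(2 ^ 14 * 3 ^ 30 * 11 ^ 9) := by
  have hdeg : f₁.natDegree = 12 := by unfold f₁; compute_degree!
  have hdeg' : (derivative f₁).natDegree = 11 := by
    rw [derivative_f₁]; simp only [f₁Rem]; compute_degree!
  have hchain := prod_pow_mul_resultant_eq_of_remainder_seq 11 (fun i hi => natDegree_f₁Rem_le hi)
    (fun i _ => natDegree_f₁Quo_le i) (fun i hi => f₁Rem_step hi)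
  rw [hdeg, hdeg', derivative_f₁]
  refine mul_left_cancel₀ (by simp [prod_range_succ, f₁Scale]) (hchain.trans ?_)
  norm_num [prod_range_succ, f₁Rem, f₁Scale, f₁RemScale, coeff_X, coeff_X_pow]

/-- The discriminant of the monic degree-12 polynomial `f₁`, expressed via its
complex roots: if `f₁` splits over `ℂ` with roots `r 0, …, r 11`, then
`∏_{i<j} (r i - r j)² = -2^14 · 3^30 · 11^9`. -/
theorem f1_discriminant
    (r : Fin 12 → ℂ)
    (hr : (X ^ 12 - 4 * X ^ 11 - 4 * X ^ 10 + 16 * X ^ 9 + 24 * X ^ 8 - 30 * X ^ 7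
        - 78 * X ^ 6 - 18 * X ^ 5 + 72 * X ^ 4 + 86 * X ^ 3 + 52 * X ^ 2 + 16 * X + 2 :
        Polynomial ℂ) = ∏ i : Fin 12, (X - C (r i))) :
    (∏ i : Fin 12, ∏ j ∈ Finset.univ.filter (fun j => i < j), (r i - r j) ^ 2)
      = -(2 ^ 14 * 3 ^ 30 * 11 ^ 9) := by
  have hnodal : f₁ = Lagrange.nodal univ r := hr
  have h := Fin.prod_prod_erase_sub r
  rw [← Lagrange.resultant_nodal_derivative, ← hnodal, resultant_f₁_derivative,
    Nat.choose_two_right] at h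
  simp only [filter_lt_eq_Ioi]
  norm_num at h ⊢
  exact h.symm
end

section
/- The quartic polynomial x^4 - 2x^3 - 4x^2 - 6x - 2 is irreducible over ℚ and its Galois group is the symmetric group S₄. -/
/-!
Eisenstein at `2` makes the quartic irreducible, so a root generates a degree-`4` extension.
If `a, b, c, d` are its roots, `ab + cd` is a root of the resolvent cubic `y³ + 4y² + 20y + 4`,
which has no integer root and so is irreducible; hence `12` divides the order of the Galois group.
The power sums `p₂ = 12`, `p₃ = 50`, `p₄ = 168` of the roots violate Cauchy–Schwarz `p₃² ≤ p₂ p₄`,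
so not all roots are real, while the sign change on `[-1, 0]` gives a real root: exactly two roots
are non-real, and complex conjugation acts on the roots as a transposition. A subgroup of `S₄` of
index at most `2` contains `A₄`, and together with a transposition it is all of `S₄`.
-/

open Polynomial

section SymmetricFunctions

variable {R : Type*} [CommRing R] {a b c d e₁ e₂ e₃ e₄ : R}

theorem vieta_quartic
    (h : X ^ 4 - C e₁ * X ^ 3 + C e₂ * X ^ 2 - C e₃ * X + C e₄ =
      (X - C a) * (X - C b) * (X - C c) * (X - C d)) :
    a + b + c + d = e₁ ∧ a * b + a * c + a * d + b * c + b * d + c * d = e₂ ∧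
      a * b * c + a * b * d + a * c * d + b * c * d = e₃ ∧ a * b * c * d = e₄ := by
  have expand : (X - C a) * (X - C b) * (X - C c) * (X - C d) =
      X ^ 4 - C (a + b + c + d) * X ^ 3 + C (a * b + a * c + a * d + b * c + b * d + c * d) * X ^ 2
        - C (a * b * c + a * b * d + a * c * d + b * c * d) * X + C (a * b * c * d) := by
    simp only [map_add, map_mul]; ring
  have coeff_eq k := congrArg (coeff · k) (h.trans expand)
  have h3 := coeff_eq 3; have h2 := coeff_eq 2; have h1 := coeff_eq 1; have h0 := coeff_eq 0
  simp only [coeff_add, coeff_sub, coeff_C_mul_X_pow, coeff_C_mul_X, coeff_X_pow, coeff_C]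
    at h3 h2 h1 h0
  norm_num at h3 h2 h1 h0
  exact ⟨by linear_combination h3, h2.symm, by linear_combination h1, h0.symm⟩

theorem resolvent_cubic_eval_mul_add_mul (he₁ : a + b + c + d = e₁)
    (he₂ : a * b + a * c + a * d + b * c + b * d + c * d = e₂)
    (he₃ : a * b * c + a * b * d + a * c * d + b * c * d = e₃) (he₄ : a * b * c * d = e₄) :
    (a * b + c * d) ^ 3 - e₂ * (a * b + c * d) ^ 2 + (e₁ * e₃ - 4 * e₄) * (a * b + c * d)
      - (e₁ ^ 2 * e₄ - 4 * e₂ * e₄ + e₃ ^ 2) = 0 := by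
  subst he₁ he₂ he₃ he₄; ring

theorem newton_quartic (he₁ : a + b + c + d = e₁)
    (he₂ : a * b + a * c + a * d + b * c + b * d + c * d = e₂)
    (he₃ : a * b * c + a * b * d + a * c * d + b * c * d = e₃) (he₄ : a * b * c * d = e₄) :
    a ^ 2 + b ^ 2 + c ^ 2 + d ^ 2 = e₁ ^ 2 - 2 * e₂ ∧
      a ^ 3 + b ^ 3 + c ^ 3 + d ^ 3 = e₁ ^ 3 - 3 * e₁ * e₂ + 3 * e₃ ∧
      a ^ 4 + b ^ 4 + c ^ 4 + d ^ 4 = e₁ ^ 4 - 4 * e₁ ^ 2 * e₂ + 2 * e₂ ^ 2 + 4 * e₁ * e₃ - 4 * e₄ := by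
  subst he₁ he₂ he₃ he₄; exact ⟨by ring, by ring, by ring⟩

end SymmetricFunctions

theorem sum_cube_sq_le_sum_sq_mul_sum_pow_four (a b c d : ℝ) :
    (a ^ 3 + b ^ 3 + c ^ 3 + d ^ 3) ^ 2 ≤
      (a ^ 2 + b ^ 2 + c ^ 2 + d ^ 2) * (a ^ 4 + b ^ 4 + c ^ 4 + d ^ 4) := by
  have := Finset.sum_mul_sq_le_sq_mul_sq Finset.univ ![a, b, c, d] ![a ^ 2, b ^ 2, c ^ 2, d ^ 2]
  simp only [Fin.sum_univ_four, Matrix.cons_val] at this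
  linear_combination this

theorem Polynomial.exists_eq_prod_X_sub_C_of_natDegree_eq_four {L : Type*} [Field L] {q : L[X]}
    (hm : q.Monic) (hq : q.natDegree = 4) (hs : q.Splits) :
    ∃ a b c d, q = (X - C a) * (X - C b) * (X - C c) * (X - C d) := by
  have hcard : q.roots.card = 4 := hq ▸ splits_iff_card_roots.mp hs
  obtain ⟨a, ha⟩ := Multiset.card_pos_iff_exists_mem.mp (by omega : 0 < q.roots.card)
  obtain ⟨t, ht⟩ := Multiset.exists_cons_of_mem ha
  obtain ⟨b, c, d, rfl⟩ := Multiset.card_eq_three.mp (by simpa [ht] using hcard)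
  refine ⟨a, b, c, d, ?_⟩
  rw [hs.eq_prod_roots_of_monic hm, ht]
  simp only [Multiset.insert_eq_cons, Multiset.map_cons, Multiset.map_singleton,
    Multiset.prod_cons, Multiset.prod_singleton]
  ring

theorem Polynomial.splits_of_card_rootSet_eq_natDegree {F K : Type*} [Field F] [Field K]
    [Algebra F K] {p : F[X]} (h : Fintype.card (p.rootSet K) = p.natDegree) :
    (p.map (algebraMap F K)).Splits := by
  classical
  rw [splits_iff_card_roots, natDegree_map]
  refine le_antisymm (card_roots_map_le_natDegree p) ?_
  rw [← h]
  simp_rw [rootSet_def, Finset.coe_sort_coe, Fintype.card_coe]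
  exact Multiset.toFinset_card_le _

theorem Polynomial.Gal.natDegree_dvd_card {F : Type*} [Field F] {p f : F[X]} (hp : p.Separable)
    (hf : Irreducible f) (hfm : f.Monic) {x : p.SplittingField} (hx : aeval x f = 0) :
    f.natDegree ∣ Nat.card p.Gal := by
  rw [card_of_separable hp, minpoly.eq_of_irreducible_of_monic hf hx hfm]
  exact minpoly.degree_dvd (.of_finite F x)

theorem Equiv.Perm.eq_top_of_index_le_two_of_isSwap_mem {α : Type*} [DecidableEq α] [Fintype α]
    {H : Subgroup (Perm α)} (hH : H.index ≤ 2) {σ : Perm α} (hσH : σ ∈ H) (hσ : σ.IsSwap) :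
    H = ⊤ := by
  have hA := alternatingGroup_le_of_index_le_two hH
  refine eq_top_iff.2 fun τ _ => ?_
  rcases Int.units_eq_one_or (sign τ) with h | h
  · exact hA (mem_alternatingGroup.2 h)
  · have : τ * σ ∈ H := hA (by rw [mem_alternatingGroup, sign_mul, h, hσ.sign_eq]; rfl)
    simpa using H.mul_mem this (H.inv_mem hσH)

namespace Polynomial.Gal

attribute [local instance] splits_ℚ_ℂ

theorem exists_card_rootSet_complex_eq_real_add_two_mul (p : ℚ[X]) :
    ∃ k, Fintype.card (p.rootSet ℂ) = Fintype.card (p.rootSet ℝ) + 2 * k := by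
  have hconj : (restrict p ℂ (Complex.conjAe.restrictScalars ℚ)) ^ 2 = 1 := by
    rw [← map_pow, show Complex.conjAe.restrictScalars ℚ ^ 2 = 1 from
      AlgEquiv.ext Complex.conj_conj, map_one]
  obtain ⟨k, hk⟩ := Equiv.Perm.two_dvd_card_support (by rw [← map_pow, hconj, map_one] :
    (galActionHom p ℂ (restrict p ℂ (Complex.conjAe.restrictScalars ℚ))) ^ 2 = 1)
  have key := card_complex_roots_eq_card_real_add_card_not_gal_inv p
  simp only [Set.toFinset_card] at key
  exact ⟨k, key.trans (by rw [hk])⟩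

theorem isSwap_galActionHom_conj {p : ℚ[X]}
    (hroots : Fintype.card (p.rootSet ℂ) = Fintype.card (p.rootSet ℝ) + 2) :
    (galActionHom p ℂ (restrict p ℂ (Complex.conjAe.restrictScalars ℚ))).IsSwap := by
  rw [← Equiv.Perm.card_support_eq_two]
  have key := card_complex_roots_eq_card_real_add_card_not_gal_inv p
  simp only [Set.toFinset_card] at key
  omega

theorem galActionHom_bijective_of_natDegree_eq_four {p : ℚ[X]} (hp : p.Separable)
    (hdeg : p.natDegree = 4) (h12 : 12 ∣ Nat.card p.Gal)
    (hroots : Fintype.card (p.rootSet ℂ) = Fintype.card (p.rootSet ℝ) + 2) :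
    Function.Bijective (galActionHom p ℂ) := by
  refine ⟨galActionHom_injective p ℂ, MonoidHom.range_eq_top.mp ?_⟩
  have hrange : Nat.card (galActionHom p ℂ).range = Nat.card p.Gal :=
    Nat.card_congr (MonoidHom.ofInjective (galActionHom_injective p ℂ)).toEquiv.symm
  have hperm : Nat.card (Equiv.Perm (p.rootSet ℂ)) = 24 := by
    rw [Nat.card_eq_fintype_card, Fintype.card_perm,
      card_rootSet_eq_natDegree hp (IsAlgClosed.splits _), hdeg]
    rfl
  have hindex := (galActionHom p ℂ).range.card_mul_index
  rw [hrange, hperm] at hindex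
  obtain ⟨k, hk⟩ := h12
  refine Equiv.Perm.eq_top_of_index_le_two_of_isSwap_mem ?_ ⟨_, rfl⟩
    (isSwap_galActionHom_conj hroots)
  have hk0 : 0 < k := by have := Nat.card_pos (α := p.Gal); omega
  rw [hk] at hindex
  nlinarith

end Polynomial.Gal

local notation "quartic" => (X ^ 4 - 2 * X ^ 3 - 4 * X ^ 2 - 6 * X - 2 : ℚ[X])
local notation "resolvent" => (X ^ 3 + 4 * X ^ 2 + 20 * X + 4 : ℚ[X])

theorem quartic_monic : Monic quartic := by monicity!

theorem quartic_natDegree : natDegree quartic = 4 := by compute_degree!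

theorem quartic_irreducible : Irreducible quartic := by
  have hq : (X ^ 4 - 2 * X ^ 3 - 4 * X ^ 2 - 6 * X - 2 : ℤ[X]).Monic := by monicity!
  have hdeg : (X ^ 4 - 2 * X ^ 3 - 4 * X ^ 2 - 6 * X - 2 : ℤ[X]).natDegree = 4 := by
    compute_degree!
  set q : ℤ[X] := X ^ 4 - 2 * X ^ 3 - 4 * X ^ 2 - 6 * X - 2
  have heis : q.IsEisensteinAt (Ideal.span {2}) := by
    refine ⟨?_, fun {n} hn => ?_, ?_⟩
    · rw [hq.leadingCoeff, Ideal.mem_span_singleton]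
      norm_num
    · rw [hdeg] at hn
      rw [Ideal.mem_span_singleton]
      interval_cases n <;> simp [q, coeff_X]
    · rw [Ideal.span_singleton_pow, Ideal.mem_span_singleton]
      simp [q, coeff_X]
  have hqZ : Irreducible q := heis.irreducible
    ((Ideal.span_singleton_prime two_ne_zero).mpr Int.prime_two) hq.isPrimitive (by omega)
  simpa [q, Polynomial.map_ofNat] using
    (IsPrimitive.Int.irreducible_iff_irreducible_map_cast hq.isPrimitive).mp hqZ

theorem resolvent_monic : Monic resolvent := by monicity!

theorem resolvent_natDegree : natDegree resolvent = 3 := by compute_degree!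

theorem resolvent_irreducible : Irreducible resolvent := by
  rw [resolvent_monic.irreducible_iff_roots_eq_zero_of_degree_le_three
    (by rw [resolvent_natDegree]; norm_num) (by rw [resolvent_natDegree])]
  refine Multiset.eq_zero_of_forall_notMem fun x hx => ?_
  have hx : x ^ 3 + 4 * x ^ 2 + 20 * x + 4 = 0 := by simpa using (mem_roots'.mp hx).2
  obtain ⟨n, rfl⟩ : IsLocalization.IsInteger ℤ x :=
    isInteger_of_is_root_of_monic (p := X ^ 3 + 4 * X ^ 2 + 20 * X + 4) (by monicity!)
      (by simp only [map_add, map_pow, map_mul, aeval_X, map_ofNat]; exact hx)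
  have hn : n ^ 3 + 4 * n ^ 2 + 20 * n + 4 = 0 := by
    rw [eq_intCast] at hx; exact_mod_cast hx
  rcases le_or_gt 0 n with h | h <;> nlinarith [sq_nonneg (n + 2)]

theorem quartic_map (L : Type*) [Field L] [Algebra ℚ L] :
    map (algebraMap ℚ L) quartic = X ^ 4 - C 2 * X ^ 3 + C (-4) * X ^ 2 - C 6 * X + C (-2) := by
  simp only [Polynomial.map_sub, Polynomial.map_mul, Polynomial.map_pow, map_X,
    Polynomial.map_ofNat, map_neg, map_ofNat C]
  ring

theorem exists_roots_of_splits_quartic {L : Type*} [Field L] [Algebra ℚ L]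
    (hs : (map (algebraMap ℚ L) quartic).Splits) :
    ∃ a b c d : L, aeval a quartic = 0 ∧ a + b + c + d = 2 ∧
      a * b + a * c + a * d + b * c + b * d + c * d = -4 ∧
      a * b * c + a * b * d + a * c * d + b * c * d = 6 ∧ a * b * c * d = -2 := by
  obtain ⟨a, b, c, d, h⟩ := exists_eq_prod_X_sub_C_of_natDegree_eq_four (quartic_monic.map _)
    (by rw [natDegree_map, quartic_natDegree]) hs
  refine ⟨a, b, c, d, ?_, vieta_quartic ((quartic_map L).symm.trans h)⟩
  rw [aeval_def, ← eval_map, h]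
  simp

theorem not_splits_real_quartic : ¬ (map (algebraMap ℚ ℝ) quartic).Splits := fun hs => by
  obtain ⟨a, b, c, d, -, he₁, he₂, he₃, he₄⟩ := exists_roots_of_splits_quartic hs
  obtain ⟨hp₂, hp₃, hp₄⟩ := newton_quartic he₁ he₂ he₃ he₄
  have := sum_cube_sq_le_sum_sq_mul_sum_pow_four a b c d
  rw [hp₂, hp₃, hp₄] at this
  norm_num at this

theorem card_rootSet_real_quartic_pos : 0 < Fintype.card (rootSet quartic ℝ) := by
  have hcont : Continuous fun x : ℝ => aeval x quartic := by fun_prop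
  have hsign : (0 : ℝ) ∈ Set.Icc (aeval 0 quartic) (aeval (-1) quartic) := by
    simp only [Set.mem_Icc, map_sub, map_pow, map_mul, aeval_X, map_ofNat]
    norm_num
  obtain ⟨x, -, hx⟩ :=
    intermediate_value_Icc' (by norm_num : (-1 : ℝ) ≤ 0) hcont.continuousOn hsign
  exact Fintype.card_pos_iff.mpr ⟨⟨x, mem_rootSet.mpr ⟨quartic_irreducible.ne_zero, hx⟩⟩⟩

theorem card_rootSet_complex_quartic : Fintype.card (rootSet quartic ℂ) = 4 := by
  rw [card_rootSet_eq_natDegree quartic_irreducible.separable (IsAlgClosed.splits _),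
    quartic_natDegree]

theorem card_rootSet_complex_eq_real_add_two_quartic :
    Fintype.card (rootSet quartic ℂ) = Fintype.card (rootSet quartic ℝ) + 2 := by
  have hC := card_rootSet_complex_quartic
  have hR : Fintype.card (rootSet quartic ℝ) ≠ 4 := fun h =>
    not_splits_real_quartic (splits_of_card_rootSet_eq_natDegree (h.trans quartic_natDegree.symm))
  obtain ⟨k, hk⟩ := Gal.exists_card_rootSet_complex_eq_real_add_two_mul quartic
  have := card_rootSet_real_quartic_pos
  omega

/-- `x⁴ - 2x³ - 4x² - 6x - 2` is irreducible over `ℚ` with Galois group `S₄`. -/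
theorem quartic1_galois_S4 :
    Irreducible (X ^ 4 - 2 * X ^ 3 - 4 * X ^ 2 - 6 * X - 2 : Polynomial ℚ) ∧
    Nonempty ((X ^ 4 - 2 * X ^ 3 - 4 * X ^ 2 - 6 * X - 2 : Polynomial ℚ).Gal ≃*
      Equiv.Perm (Fin 4)) := by
  refine ⟨quartic_irreducible, ?_⟩
  have hsep := quartic_irreducible.separable
  obtain ⟨a, b, c, d, ha, he₁, he₂, he₃, he₄⟩ :=
    exists_roots_of_splits_quartic (SplittingField.splits quartic)
  have h4 : 4 ∣ Nat.card (Gal quartic) := by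
    simpa only [quartic_natDegree] using
      Gal.natDegree_dvd_card hsep quartic_irreducible quartic_monic ha
  have hβ : aeval (a * b + c * d) resolvent = 0 := by
    have := resolvent_cubic_eval_mul_add_mul he₁ he₂ he₃ he₄
    simp only [map_add, map_pow, map_mul, aeval_X, map_ofNat]
    linear_combination this
  have h3 : 3 ∣ Nat.card (Gal quartic) := by
    simpa only [resolvent_natDegree] using
      Gal.natDegree_dvd_card hsep resolvent_irreducible resolvent_monic hβ
  have hbij := Gal.galActionHom_bijective_of_natDegree_eq_four hsep quartic_natDegree
    (Nat.Coprime.mul_dvd_of_dvd_of_dvd (by norm_num) h3 h4)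
    card_rootSet_complex_eq_real_add_two_quartic
  exact ⟨(MulEquiv.ofBijective _ hbij).trans
    (Fintype.equivFinOfCardEq card_rootSet_complex_quartic).permCongrHom⟩
end
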